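/- Let 0 < p < 1 and ε ∈ (0,1). The infinite Toeplitz matrix T = {1/(ε + j − k)}_{j,k ≥ 0} is not a bounded Schur multiplier of the Schatten ideal L_p: sup over finite submatrices of ‖·‖_{m_p} is infinite. -/

import Mathlib

open scoped ENNReal

noncomputable section

namespace Paper

variable {H : Type*} [NormedAddCommGroup H] [InnerProductSpace ℂ H] [CompleteSpace H]

/-- The `j`-th singular value (approximation number) of a bounded operator. -/
noncomputable def sv (T : H →L[ℂ] H) (j : ℕ) : ℝ :=
  sInf ((fun R : H →L[ℂ] H => ‖T - R‖) ''
    {R | Module.finrank ℂ (LinearMap.range (R : H →ₗ[ℂ] H)) ≤ j})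

/-- The Schatten `p`-quasi-norm. -/
noncomputable def snorm (p : ℝ) (T : H →L[ℂ] H) : ℝ :=
  (∑' j, sv T j ^ p) ^ (1 / p)

/-- Membership in the Schatten ideal `L_p`. -/
def MemLp (p : ℝ) (T : H →L[ℂ] H) : Prop :=
  IsCompactOperator T ∧ Summable fun j => sv T j ^ p

/-- Schatten `p`-quasi-norm of a matrix. -/
noncomputable def msnorm (p : ℝ) {n : Type*} [Fintype n] [DecidableEq n]
    (A : Matrix n n ℂ) : ℝ :=
  snorm p (Matrix.toEuclideanCLM (𝕜 := ℂ) A)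

/-- The `L_p` Schur multiplier norm of a finite matrix. -/
noncomputable def schurNorm (p : ℝ) {n : Type*} [Fintype n] [DecidableEq n]
    (A : Matrix n n ℂ) : ℝ :=
  sSup {x | ∃ B : Matrix n n ℂ, msnorm p B ≤ 1 ∧ x = msnorm p (A.hadamard B)}

/-- The `L_p` Schur multiplier norm of a matrix indexed by arbitrary sets:
the supremum of the `m_p` norms of all finite submatrices. -/
noncomputable def schurNormInf (p : ℝ) {I J : Type*} (A : I → J → ℂ) : ℝ≥0∞ :=
  ⨆ (n : ℕ) (r : Fin n → I) (c : Fin n → J),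
    ENNReal.ofReal (schurNorm p (Matrix.of fun i j => A (r i) (c j)))

/-- `f(A)`: functional calculus of a self-adjoint operator applied to `f : ℝ → ℂ`. -/
noncomputable def opFun (f : ℝ → ℂ) (A : H →L[ℂ] H) : H →L[ℂ] H :=
  cfc (fun z : ℂ => f z.re) A

/-- `f` is `L_p`-operator Lipschitz with constant `C`. -/
def OpLipschitzWith (p : ℝ) (C : ℝ) (f : ℝ → ℂ) : Prop :=
  ∀ (K : Type) [NormedAddCommGroup K] [InnerProductSpace ℂ K] [CompleteSpace K],
    ∀ A B : K →L[ℂ] K, IsSelfAdjoint A → IsSelfAdjoint B → MemLp p (A - B) →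
      snorm p (opFun f A - opFun f B) ≤ C * snorm p (A - B)

/-- Hölder class `C^β`. -/
def memHolderClass (β : ℝ) (f : ℝ → ℂ) : Prop :=
  ContDiff ℝ (⌊β⌋₊ : ℕ) f ∧
    ∃ C : NNReal, HolderWith C (Real.toNNReal (β - ⌊β⌋₊)) (iteratedDeriv ⌊β⌋₊ f)

/-- Diagonal projection matrix associated to a set of indices. -/
noncomputable def diagProj {n : Type*} [Fintype n] [DecidableEq n] (S : Set n) :
    Matrix n n ℂ :=
  Matrix.diagonal (S.indicator fun _ => 1)

/-!
Take the `N × N` submatrix of `T` on the rows and columns `(2N+1)·i`, `i < N`, and test it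
against the rank-one matrix `B` with all entries `1/N`, which has `‖B‖_p = ‖B‖ = 1`. The spacing
makes the off-diagonal entries of `T` at most `1/(2N)`, so `T ∘ B` is `(εN)⁻¹ · 1` up to a
perturbation of operator norm `≤ 1/(2N)`. Since singular values are `1`-Lipschitz in the operator
norm, all `N` singular values of `T ∘ B` are at least `1/(2N)`, whence
`‖T ∘ B‖_p ≥ N^{1/p} / (2N) → ∞` as `N → ∞`, because `p < 1`.
-/

open Filter

section SingularValues

variable {E : Type*} [NormedAddCommGroup E] [InnerProductSpace ℂ E]

lemma finrank_range_zero_le (j : ℕ) :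
    Module.finrank ℂ (LinearMap.range ((0 : E →L[ℂ] E) : E →ₗ[ℂ] E)) ≤ j := by
  rw [ContinuousLinearMap.toLinearMap_zero, LinearMap.range_zero, finrank_bot]
  exact j.zero_le

lemma sv_le {T R : E →L[ℂ] E} {j : ℕ}
    (hR : Module.finrank ℂ (LinearMap.range (R : E →ₗ[ℂ] E)) ≤ j) : sv T j ≤ ‖T - R‖ :=
  csInf_le ⟨0, by rintro _ ⟨_, -, rfl⟩; exact norm_nonneg _⟩ ⟨R, hR, rfl⟩

lemma le_sv {T : E →L[ℂ] E} {j : ℕ} {c : ℝ}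
    (h : ∀ R : E →L[ℂ] E, Module.finrank ℂ (LinearMap.range (R : E →ₗ[ℂ] E)) ≤ j →
      c ≤ ‖T - R‖) :
    c ≤ sv T j :=
  le_csInf ⟨‖T - 0‖, 0, finrank_range_zero_le j, rfl⟩ (by rintro _ ⟨R, hR, rfl⟩; exact h R hR)

lemma sv_nonneg (T : E →L[ℂ] E) (j : ℕ) : 0 ≤ sv T j :=
  le_sv fun _ _ => norm_nonneg _

lemma sv_le_norm (T : E →L[ℂ] E) (j : ℕ) : sv T j ≤ ‖T‖ := by
  simpa using sv_le (T := T) (R := 0) (finrank_range_zero_le j)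

lemma sv_eq_zero_of_finrank_range_le {T : E →L[ℂ] E} {j : ℕ}
    (h : Module.finrank ℂ (LinearMap.range (T : E →ₗ[ℂ] E)) ≤ j) : sv T j = 0 :=
  le_antisymm (by simpa using sv_le (T := T) h) (sv_nonneg T j)

lemma sv_le_sv_add_norm_sub (S T : E →L[ℂ] E) (j : ℕ) : sv S j ≤ sv T j + ‖S - T‖ := by
  rw [← sub_le_iff_le_add]
  refine le_sv fun R hR => sub_le_iff_le_add.2 ?_
  calc sv S j ≤ ‖(T - R) + (S - T)‖ := by simpa using sv_le (T := S) hR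
    _ ≤ ‖T - R‖ + ‖S - T‖ := norm_add_le _ _

variable [FiniteDimensional ℂ E]

lemma sv_eq_zero_of_finrank_le (T : E →L[ℂ] E) {j : ℕ} (h : Module.finrank ℂ E ≤ j) :
    sv T j = 0 :=
  sv_eq_zero_of_finrank_range_le ((Submodule.finrank_le _).trans h)

lemma sv_zero_eq_norm (T : E →L[ℂ] E) : sv T 0 = ‖T‖ := by
  refine le_antisymm (sv_le_norm T 0) (le_sv fun R hR => ?_)
  have hR0 : R = 0 := by
    ext x
    have hbot := Submodule.finrank_eq_zero.mp (Nat.le_zero.mp hR)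
    simpa [hbot] using LinearMap.mem_range_self (R : E →ₗ[ℂ] E) x
  rw [hR0, sub_zero]

/-- When `rank R < dim E`, a nonzero vector in `ker R` shows `‖c‖ ≤ ‖c • 1 - R‖`. -/
lemma norm_le_sv_smul_one (c : ℂ) {j : ℕ} (hj : j < Module.finrank ℂ E) :
    ‖c‖ ≤ sv (c • (1 : E →L[ℂ] E)) j := by
  refine le_sv fun R hR => ?_
  have hker : LinearMap.ker (R : E →ₗ[ℂ] E) ≠ ⊥ := by
    intro hbot
    have := LinearMap.finrank_range_add_finrank_ker (R : E →ₗ[ℂ] E)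
    rw [hbot, finrank_bot] at this
    omega
  obtain ⟨v, hv, hv0⟩ := Submodule.exists_mem_ne_zero_of_ne_bot hker
  have hRv : (c • (1 : E →L[ℂ] E) - R) v = c • v := by
    have hRv : R v = 0 := hv
    simp [hRv]
  have := (c • (1 : E →L[ℂ] E) - R).le_opNorm v
  rw [hRv, norm_smul] at this
  exact le_of_mul_le_mul_right this (norm_pos_iff.mpr hv0)

end SingularValues

section SchattenNorm

variable {E : Type*} [NormedAddCommGroup E] [InnerProductSpace ℂ E] {p : ℝ}

lemma mul_rpow_rpow_one_div {a x : ℝ} (ha : 0 ≤ a) (hx : 0 ≤ x) (hp : p ≠ 0) :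
    (a * x ^ p) ^ (1 / p) = a ^ (1 / p) * x := by
  rw [Real.mul_rpow ha (Real.rpow_nonneg hx p), one_div, Real.rpow_rpow_inv hx hp]

lemma snorm_nonneg (T : E →L[ℂ] E) : 0 ≤ snorm p T :=
  Real.rpow_nonneg (tsum_nonneg fun j => Real.rpow_nonneg (sv_nonneg T j) p) _

variable [FiniteDimensional ℂ E]

lemma summable_sv_rpow (hp : p ≠ 0) (T : E →L[ℂ] E) : Summable fun j => sv T j ^ p :=
  summable_of_ne_finset_zero (s := Finset.range (Module.finrank ℂ E)) fun j hj => by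
    rw [sv_eq_zero_of_finrank_le T (by simpa using hj), Real.zero_rpow hp]

lemma snorm_le_finrank_rpow_mul_norm (hp : 0 < p) (T : E →L[ℂ] E) :
    snorm p T ≤ (Module.finrank ℂ E : ℝ) ^ (1 / p) * ‖T‖ := by
  set n := Module.finrank ℂ E
  have hsum : ∑' j, sv T j ^ p ≤ n * ‖T‖ ^ p := by
    rw [tsum_eq_sum (s := Finset.range n) fun j hj => by
      rw [sv_eq_zero_of_finrank_le T (by simpa using hj), Real.zero_rpow hp.ne']]
    simpa using Finset.sum_le_sum fun j (_ : j ∈ Finset.range n) =>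
      Real.rpow_le_rpow (sv_nonneg T j) (sv_le_norm T j) hp.le
  rw [← mul_rpow_rpow_one_div n.cast_nonneg (norm_nonneg T) hp.ne']
  exact Real.rpow_le_rpow (tsum_nonneg fun j => Real.rpow_nonneg (sv_nonneg T j) p) hsum
    (by positivity)

lemma le_snorm_of_le_sv (hp : 0 < p) (T : E →L[ℂ] E) {c : ℝ} {K : ℕ}
    (h : ∀ j < K, c ≤ sv T j) : (K : ℝ) ^ (1 / p) * c ≤ snorm p T := by
  rcases lt_or_ge c 0 with hc | hc
  · exact (mul_nonpos_of_nonneg_of_nonpos (by positivity) hc.le).trans (snorm_nonneg T)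
  have hsum : K * c ^ p ≤ ∑' j, sv T j ^ p := by
    refine le_trans ?_ ((summable_sv_rpow hp.ne' T).sum_le_tsum (Finset.range K)
      fun j _ => Real.rpow_nonneg (sv_nonneg T j) p)
    simpa using Finset.sum_le_sum fun j (hj : j ∈ Finset.range K) =>
      Real.rpow_le_rpow hc (h j (Finset.mem_range.mp hj)) hp.le
  rw [← mul_rpow_rpow_one_div K.cast_nonneg hc hp.ne']
  exact Real.rpow_le_rpow (by positivity) hsum (by positivity)

lemma norm_le_snorm (hp : 0 < p) (T : E →L[ℂ] E) : ‖T‖ ≤ snorm p T := by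
  simpa using le_snorm_of_le_sv hp T (K := 1) fun j hj => by
    rw [Nat.lt_one_iff.mp hj, sv_zero_eq_norm]

lemma snorm_eq_norm_of_finrank_range_le_one (hp : p ≠ 0) {T : E →L[ℂ] E}
    (hT : Module.finrank ℂ (LinearMap.range (T : E →ₗ[ℂ] E)) ≤ 1) : snorm p T = ‖T‖ := by
  rw [snorm, tsum_eq_single 0 fun j hj => by
    rw [sv_eq_zero_of_finrank_range_le (hT.trans (Nat.one_le_iff_ne_zero.mpr hj)),
      Real.zero_rpow hp], sv_zero_eq_norm, one_div, Real.rpow_rpow_inv (norm_nonneg T) hp]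

end SchattenNorm

section Matrix

variable {n : Type*} [Fintype n] [DecidableEq n] {p : ℝ}

lemma norm_apply_le_norm_toEuclideanCLM (M : Matrix n n ℂ) (i j : n) :
    ‖M i j‖ ≤ ‖Matrix.toEuclideanCLM (𝕜 := ℂ) M‖ := by
  set T := Matrix.toEuclideanCLM (𝕜 := ℂ) M
  have hcol : M i j = (T (EuclideanSpace.single j 1)).ofLp i := by
    simp [T, Matrix.mulVec, dotProduct]
  calc ‖M i j‖ ≤ ‖T (EuclideanSpace.single j 1)‖ := hcol ▸ PiLp.norm_apply_le _ i
    _ ≤ ‖T‖ * ‖EuclideanSpace.single j (1 : ℂ)‖ := T.le_opNorm _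
    _ = ‖T‖ := by simp

lemma norm_toEuclideanCLM_le_card_mul {M : Matrix n n ℂ} {c : ℝ} (hc : 0 ≤ c)
    (h : ∀ i j, ‖M i j‖ ≤ c) :
    ‖Matrix.toEuclideanCLM (𝕜 := ℂ) M‖ ≤ Fintype.card n * c := by
  refine ContinuousLinearMap.opNorm_le_bound _ (by positivity) fun x => ?_
  set N := (Fintype.card n : ℝ)
  have hrow : ∀ i, ‖(Matrix.toEuclideanCLM (𝕜 := ℂ) M x).ofLp i‖ ^ 2 ≤ N * (c * ‖x‖) ^ 2 := by
    intro i
    calc ‖(Matrix.toEuclideanCLM (𝕜 := ℂ) M x).ofLp i‖ ^ 2 ≤ (∑ j, c * ‖x.ofLp j‖) ^ 2 := by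
          rw [Matrix.ofLp_toEuclideanCLM]
          refine pow_le_pow_left₀ (norm_nonneg _) ((norm_sum_le _ _).trans ?_) 2
          exact Finset.sum_le_sum fun j _ => by
            rw [norm_mul]; exact mul_le_mul_of_nonneg_right (h i j) (norm_nonneg _)
      _ = c ^ 2 * (∑ j, ‖x.ofLp j‖) ^ 2 := by rw [← Finset.mul_sum]; ring
      _ ≤ c ^ 2 * (N * ∑ j, ‖x.ofLp j‖ ^ 2) := by
          gcongr
          simpa using sq_sum_le_card_mul_sum_sq (s := Finset.univ) (f := fun j => ‖x.ofLp j‖)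
      _ = N * (c * ‖x‖) ^ 2 := by rw [mul_pow, EuclideanSpace.norm_sq_eq]; ring
  refine (pow_le_pow_iff_left₀ (norm_nonneg _) (by positivity) two_ne_zero).mp ?_
  calc ‖Matrix.toEuclideanCLM (𝕜 := ℂ) M x‖ ^ 2
      = ∑ i, ‖(Matrix.toEuclideanCLM (𝕜 := ℂ) M x).ofLp i‖ ^ 2 := EuclideanSpace.norm_sq_eq _
    _ ≤ ∑ _i : n, N * (c * ‖x‖) ^ 2 := Finset.sum_le_sum fun i _ => hrow i
    _ = (N * c * ‖x‖) ^ 2 := by simp [N]; ring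

lemma msnorm_hadamard_le (hp : 0 < p) (A : Matrix n n ℂ) {B : Matrix n n ℂ}
    (hB : msnorm p B ≤ 1) :
    msnorm p (A.hadamard B) ≤
      (Fintype.card n : ℝ) ^ (1 / p) * (Fintype.card n * ‖Matrix.toEuclideanCLM (𝕜 := ℂ) A‖) := by
  have hB' : ‖Matrix.toEuclideanCLM (𝕜 := ℂ) B‖ ≤ 1 := (norm_le_snorm hp _).trans hB
  have hentry : ∀ i j, ‖A.hadamard B i j‖ ≤ ‖Matrix.toEuclideanCLM (𝕜 := ℂ) A‖ := fun i j => by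
    rw [Matrix.hadamard_apply, norm_mul]
    refine (mul_le_mul_of_nonneg_right (norm_apply_le_norm_toEuclideanCLM A i j)
      (norm_nonneg _)).trans (mul_le_of_le_one_right (norm_nonneg _) ?_)
    exact (norm_apply_le_norm_toEuclideanCLM B i j).trans hB'
  have := snorm_le_finrank_rpow_mul_norm hp (Matrix.toEuclideanCLM (𝕜 := ℂ) (A.hadamard B))
  rw [finrank_euclideanSpace] at this
  exact this.trans (by gcongr; exact norm_toEuclideanCLM_le_card_mul (norm_nonneg _) hentry)

lemma msnorm_hadamard_le_schurNorm (hp : 0 < p) (A : Matrix n n ℂ) {B : Matrix n n ℂ}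
    (hB : msnorm p B ≤ 1) : msnorm p (A.hadamard B) ≤ schurNorm p A :=
  le_csSup ⟨_, by rintro _ ⟨B', hB', rfl⟩; exact msnorm_hadamard_le hp A hB'⟩ ⟨B, hB, rfl⟩

variable (n) in
/-- The orthogonal projection onto the constant vectors. -/
def meanMatrix : Matrix n n ℂ :=
  Matrix.of fun _ _ => (Fintype.card n : ℂ)⁻¹

lemma finrank_range_meanMatrix_le_one :
    Module.finrank ℂ (LinearMap.range (Matrix.toEuclideanCLM (𝕜 := ℂ) (meanMatrix n) :
      EuclideanSpace ℂ n →ₗ[ℂ] EuclideanSpace ℂ n)) ≤ 1 := by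
  set v : EuclideanSpace ℂ n := WithLp.toLp 2 fun _ => 1
  have hle : LinearMap.range (Matrix.toEuclideanCLM (𝕜 := ℂ) (meanMatrix n) :
      EuclideanSpace ℂ n →ₗ[ℂ] EuclideanSpace ℂ n) ≤ ℂ ∙ v := by
    rintro _ ⟨x, rfl⟩
    refine Submodule.mem_span_singleton.mpr ⟨∑ k, (Fintype.card n : ℂ)⁻¹ * x.ofLp k, ?_⟩
    ext i
    simp [v, meanMatrix, Matrix.mulVec, dotProduct]
  exact (Submodule.finrank_mono hle).trans (finrank_span_le_card {v}) |>.trans_eq (by simp)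

lemma msnorm_meanMatrix_le_one (hp : p ≠ 0) : msnorm p (meanMatrix n) ≤ 1 := by
  have hrank := finrank_range_meanMatrix_le_one (n := n)
  unfold msnorm
  rw [snorm_eq_norm_of_finrank_range_le_one hp hrank]
  refine (norm_toEuclideanCLM_le_card_mul (c := (Fintype.card n : ℝ)⁻¹) (by positivity)
    fun i j => by simp [meanMatrix]).trans ?_
  exact mul_inv_le_one

end Matrix

/-- Tested against `meanMatrix`, a matrix with constant diagonal `d` and off-diagonal entries
at most `η` gives `(d / N) • 1` up to an error of operator norm `≤ η`. -/
lemma card_rpow_mul_le_schurNorm {n : Type*} [Fintype n] [DecidableEq n] [Nonempty n] {p : ℝ}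
    (hp : 0 < p) (M : Matrix n n ℂ) {d : ℂ} {η : ℝ} (hη : 0 ≤ η) (hdiag : ∀ i, M i i = d)
    (hoff : ∀ i j, i ≠ j → ‖M i j‖ ≤ η) :
    (Fintype.card n : ℝ) ^ (1 / p) * (‖d‖ / Fintype.card n - η) ≤ schurNorm p M := by
  set N := Fintype.card n
  have hN : (0 : ℝ) < N := Nat.cast_pos.mpr Fintype.card_pos
  set X := M.hadamard (meanMatrix n)
  have hclose : ‖Matrix.toEuclideanCLM (𝕜 := ℂ) ((d / N) • (1 : Matrix n n ℂ) - X)‖ ≤ η := by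
    refine (norm_toEuclideanCLM_le_card_mul (c := η / N) (by positivity) fun i j => ?_).trans_eq
      (mul_div_cancel₀ _ hN.ne')
    rcases eq_or_ne i j with rfl | hij
    · simp [X, meanMatrix, hdiag, N, div_eq_mul_inv]
      positivity
    · simpa [X, meanMatrix, hij, N, div_eq_mul_inv] using
        mul_le_mul_of_nonneg_right (hoff i j hij) (inv_nonneg.mpr hN.le)
  have hsv : ∀ j < N, ‖d‖ / N - η ≤ sv (Matrix.toEuclideanCLM (𝕜 := ℂ) X) j := by
    intro j hj
    have hscalar := norm_le_sv_smul_one (E := EuclideanSpace ℂ n) (d / N)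
      (hj.trans_eq (finrank_euclideanSpace).symm)
    have hlip := sv_le_sv_add_norm_sub ((d / N) • 1) (Matrix.toEuclideanCLM (𝕜 := ℂ) X) j
    rw [map_sub, map_smul, map_one] at hclose
    rw [norm_div, Complex.norm_natCast] at hscalar
    linarith
  calc _ ≤ msnorm p X := le_snorm_of_le_sv hp _ hsv
    _ ≤ schurNorm p M := msnorm_hadamard_le_schurNorm hp M (msnorm_meanMatrix_le_one hp.ne')

lemma ofReal_schurNorm_le_schurNormInf {p : ℝ} {I J : Type*} (A : I → J → ℂ) {N : ℕ} (r : Fin N → I)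
    (c : Fin N → J) :
    ENNReal.ofReal (schurNorm p (Matrix.of fun i j => A (r i) (c j))) ≤ schurNormInf p A :=
  le_iSup_of_le N (le_iSup₂_of_le r c le_rfl)

lemma sub_one_le_abs_add_natCast_mul_sub {ε : ℝ} (hε : |ε| ≤ 1) (m : ℕ) {i j : ℕ}
    (hij : i ≠ j) : (m : ℝ) - 1 ≤ |ε + ↑(m * i) - ↑(m * j)| := by
  have hij' : (1 : ℝ) ≤ |(i : ℝ) - j| := by
    exact_mod_cast Int.one_le_abs (sub_ne_zero.mpr (Nat.cast_injective.ne hij : (i : ℤ) ≠ j))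
  have := abs_sub_abs_le_abs_sub ((m : ℝ) * (i - j)) (-ε)
  rw [abs_mul, Nat.abs_cast, abs_neg] at this
  push_cast
  calc (m : ℝ) - 1 ≤ m * |(i : ℝ) - j| - |ε| := by nlinarith [m.cast_nonneg (α := ℝ)]
    _ ≤ _ := this.trans_eq (by ring_nf)

lemma rpow_div_two_le_schurNorm_toeplitz {p ε : ℝ} (hp : 0 < p) (he : 0 < ε) (he1 : ε < 1)
    {N : ℕ} (hN : 0 < N) :
    (N : ℝ) ^ (1 / p - 1) / 2 ≤ schurNorm p (Matrix.of fun i j : Fin N =>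
      (((ε + ((2 * N + 1) * (i : ℕ) : ℕ) - ((2 * N + 1) * (j : ℕ) : ℕ) : ℝ) : ℂ))⁻¹) := by
  have : Nonempty (Fin N) := ⟨⟨0, hN⟩⟩
  have hN' : (0 : ℝ) < N := Nat.cast_pos.mpr hN
  refine le_trans ?_ (card_rpow_mul_le_schurNorm hp _ (d := (ε : ℂ)⁻¹) (η := (2 * N : ℝ)⁻¹)
    (by positivity) (fun i => by simp) fun i j hij => ?_)
  · have hε : 1 ≤ ε⁻¹ := (one_le_inv₀ he).mpr he1.le
    rw [Fintype.card_fin, norm_inv, Complex.norm_real, Real.norm_of_nonneg he.le]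
    calc (N : ℝ) ^ (1 / p - 1) / 2 = (N : ℝ) ^ (1 / p) * (1 / N - (2 * N : ℝ)⁻¹) := by
          rw [Real.rpow_sub_one hN'.ne']; field_simp; ring
      _ ≤ (N : ℝ) ^ (1 / p) * (ε⁻¹ / N - (2 * N : ℝ)⁻¹) := by gcongr
  · rw [Matrix.of_apply, norm_inv, Complex.norm_real, Real.norm_eq_abs]
    refine inv_anti₀ (by positivity) ?_
    have := sub_one_le_abs_add_natCast_mul_sub (abs_le.mpr ⟨by linarith, he1.le⟩) (2 * N + 1)
      (Fin.val_injective.ne hij)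
    push_cast at this ⊢
    linarith

/-- the Toeplitz matrix `{1/(ε+j−k)}` is not an `L_p`-bounded Schur
multiplier for `0 < p < 1`. -/
theorem stmt7 (p ε : ℝ) (hp : 0 < p) (hp1 : p < 1) (he : 0 < ε) (he1 : ε < 1) :
    schurNormInf p (fun j k : ℕ => (((ε + j - k : ℝ) : ℂ))⁻¹) = ⊤ := by
  refine ENNReal.eq_top_of_forall_nnreal_le fun r => ?_
  have hgrowth : Tendsto (fun N : ℕ => (N : ℝ) ^ (1 / p - 1) / 2) atTop atTop :=
    ((tendsto_rpow_atTop (sub_pos.mpr (one_lt_one_div hp hp1))).comp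
      tendsto_natCast_atTop_atTop).atTop_div_const two_pos
  obtain ⟨N, hrN, hN⟩ := ((hgrowth.eventually_ge_atTop r).and (eventually_gt_atTop 0)).exists
  have hsection := ofReal_schurNorm_le_schurNormInf (p := p)
    (fun j k : ℕ => (((ε + j - k : ℝ) : ℂ))⁻¹)
    (fun i : Fin N => (2 * N + 1) * (i : ℕ)) (fun i : Fin N => (2 * N + 1) * (i : ℕ))
  calc (r : ℝ≥0∞) = ENNReal.ofReal r := (ENNReal.ofReal_coe_nnreal).symm
    _ ≤ _ := ENNReal.ofReal_le_ofReal (hrN.trans (rpow_div_two_le_schurNorm_toeplitz hp he he1 hN))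
    _ ≤ _ := hsection

end Paper
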